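/- In a base space, approach of nets is transitive: if a net u approaches a net v and v approaches a net w, then u approaches w. -/
import Mathlib


open Set Filter Topology

universe u v w

/-- A graded base on a topological space: a base of the topology partitioned
(indexed) by grades `ε : E`, each grade being an open cover of `X`. -/
structure GradedBase (X : Type*) [TopologicalSpace X] (E : Type*) where
  B : E → Set (Set X)
  isOpen' : ∀ ε : E, ∀ O ∈ B ε, IsOpen O
  covers : ∀ ε : E, ∀ x : X, ∃ O ∈ B ε, x ∈ O
  isBasis : TopologicalSpace.IsTopologicalBasis (⋃ ε : E, B ε)

variable {X : Type*} [TopologicalSpace X] {E : Type*}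
variable {Y : Type*} [TopologicalSpace Y] {F : Type*}

/-- `O` contains a tail of the net `u`. -/
def ContainsTail {I : Type*} [Preorder I] (u : I → X) (O : Set X) : Prop :=
  ∃ i₀, ∀ i, i₀ ≤ i → u i ∈ O

/-- The net `u` approaches the net `v`: for every grade `ε` and every homogeneous
selection of grade-`ε` basic neighborhoods of the points of `v`, eventually in `j`
the selected neighborhood `O j` contains a tail of `u`. -/
def Approaches (GB : GradedBase X E) {I J : Type*} [Preorder I] [Preorder J]
    (u : I → X) (v : J → X) : Prop :=
  ∀ ε : E, ∀ O : J → Set X, (∀ j, O j ∈ GB.B ε ∧ v j ∈ O j) →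
    ∃ j₀, ∀ j, j₀ ≤ j → ContainsTail u (O j)

/-- The net `u` converges to `x`: every basic neighborhood of `x` contains a tail of `u`
(equivalently, `u` approaches the constant net at `x`). -/
def ConvergesTo (GB : GradedBase X E) {I : Type*} [Preorder I] (u : I → X) (x : X) : Prop :=
  ∀ ε : E, ∀ O ∈ GB.B ε, x ∈ O → ContainsTail u O

/-- The constant net at `x` approaches the net `u`. -/
def ConstApproaches (GB : GradedBase X E) {I : Type*} [Preorder I] (x : X) (u : I → X) : Prop :=
  ∀ ε : E, ∀ O : I → Set X, (∀ i, O i ∈ GB.B ε ∧ u i ∈ O i) →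
    ∃ i₀, ∀ i, i₀ ≤ i → x ∈ O i

/-- A cofinal (final) map of directed sets, used to define subnets `u ∘ φ`. -/
def IsCofinalMap {K I : Type*} [Preorder K] [Preorder I] (φ : K → I) : Prop :=
  ∀ i, ∃ k₀, ∀ k, k₀ ≤ k → i ≤ φ k

universe s xu eu iu

/-- The net `u` is cauchy: all of its subnets approach each other. -/
def IsCauchyNet {X : Type xu} [TopologicalSpace X] {E : Type eu} (GB : GradedBase X E)
    {I : Type iu} [Preorder I] (n : I → X) : Prop :=
  ∀ (K L : Type s) [Preorder K] [IsDirected K (· ≤ ·)] [Nonempty K]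
    [Preorder L] [IsDirected L (· ≤ ·)] [Nonempty L] (φ : K → I) (ψ : L → I),
    IsCofinalMap φ → IsCofinalMap ψ → Approaches GB (n ∘ φ) (n ∘ ψ)

/-- A locally symmetric base space (`lsb`-space): if a net converges to `x`, then the
constant net `{x}` approaches the net. -/
def IsLSB (GB : GradedBase X E) : Prop :=
  ∀ (I : Type u) [Preorder I] [IsDirected I (· ≤ ·)] [Nonempty I] (n : I → X) (x : X),
    ConvergesTo GB n x → ConstApproaches GB x n

/-- A symmetric base space (`sb`-space): approach of nets is symmetric. -/
def IsSB (GB : GradedBase X E) : Prop :=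
  ∀ (I J : Type u) [Preorder I] [IsDirected I (· ≤ ·)] [Nonempty I]
    [Preorder J] [IsDirected J (· ≤ ·)] [Nonempty J] (n : I → X) (m : J → X),
    Approaches GB n m → Approaches GB m n

/-- Completeness: every cauchy net converges. -/
def IsCompleteBS {X : Type xu} [TopologicalSpace X] {E : Type eu} (GB : GradedBase X E) : Prop :=
  ∀ (I : Type iu) [Preorder I] [IsDirected I (· ≤ ·)] [Nonempty I] (n : I → X),
    IsCauchyNet.{s} GB n → ∃ x, ConvergesTo GB n x

/-- Precompactness (total boundedness): every net has a cauchy subnet. -/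
def IsPrecompactBS {X : Type xu} [TopologicalSpace X] {E : Type eu} (GB : GradedBase X E) : Prop :=
  ∀ (I : Type iu) [Preorder I] [IsDirected I (· ≤ ·)] [Nonempty I] (n : I → X),
    ∃ (K : Type iu) (_ : Preorder K) (_ : IsDirected K (· ≤ ·)) (_ : Nonempty K)
      (φ : K → I), IsCofinalMap φ ∧ IsCauchyNet.{s} GB (n ∘ φ)

/-- Continuity in the net sense: convergent nets map to convergent nets. -/
def ContinuousNet (GB : GradedBase X E) (GB' : GradedBase Y F) (f : X → Y) : Prop :=
  ∀ (I : Type u) [Preorder I] [IsDirected I (· ≤ ·)] [Nonempty I] (n : I → X) (x : X),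
    ConvergesTo GB n x → ConvergesTo GB' (f ∘ n) (f x)

/-- Uniform continuity: approaching nets map to approaching nets. -/
def UniformlyCont (GB : GradedBase X E) (GB' : GradedBase Y F) (f : X → Y) : Prop :=
  ∀ (I J : Type u) [Preorder I] [IsDirected I (· ≤ ·)] [Nonempty I]
    [Preorder J] [IsDirected J (· ≤ ·)] [Nonempty J] (n : I → X) (m : J → X),
    Approaches GB n m → Approaches GB' (f ∘ n) (f ∘ m)

/-- The induced graded base on a subset `A ⊆ X`. -/
def GradedBase.induced (GB : GradedBase X E) (A : Set X) : GradedBase A E where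
  B ε := (fun O => (Subtype.val ⁻¹' O : Set A)) '' GB.B ε
  isOpen' := by
    rintro ε O ⟨U, hU, rfl⟩
    exact (GB.isOpen' ε U hU).preimage continuous_subtype_val
  covers := by
    intro ε x
    obtain ⟨O, hO, hx⟩ := GB.covers ε x.1
    exact ⟨_, ⟨O, hO, rfl⟩, hx⟩
  isBasis := by
    have h : (⋃ ε : E, (fun O => (Subtype.val ⁻¹' O : Set A)) '' GB.B ε) =
        (fun O => (Subtype.val ⁻¹' O : Set A)) '' (⋃ ε : E, GB.B ε) := by
      rw [Set.image_iUnion]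
    rw [h]
    exact GB.isBasis.isInducing Topology.IsInducing.subtypeVal

/-- In a base space, approach of nets is transitive. -/
theorem approaches_trans {X : Type*} [TopologicalSpace X] {E : Type*} (GB : GradedBase X E)
    {I J K : Type*} [Preorder I] [IsDirected I (· ≤ ·)] [Nonempty I]
    [Preorder J] [IsDirected J (· ≤ ·)] [Nonempty J]
    [Preorder K] [IsDirected K (· ≤ ·)] [Nonempty K]
    (u : I → X) (v : J → X) (w : K → X)
    (huv : Approaches GB u v) (hvw : Approaches GB v w) :
    Approaches GB u w := by
  intro ε O hO
  obtain ⟨k₀, hk₀⟩ := hvw ε O hO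
  refine ⟨k₀, fun k hk => ?_⟩
  obtain ⟨j₀, hj₀⟩ := hk₀ k hk
  classical
  set O' : J → Set X := fun j => if j₀ ≤ j then O k else Classical.choose (GB.covers ε (v j))
  have hO' : ∀ j, O' j ∈ GB.B ε ∧ v j ∈ O' j := by
    intro j
    by_cases h : j₀ ≤ j
    · simp only [O', if_pos h]
      exact ⟨(hO k).1, hj₀ j h⟩
    · simp only [O', if_neg h]
      obtain ⟨h1, h2⟩ := Classical.choose_spec (GB.covers ε (v j))
      exact ⟨h1, h2⟩
  obtain ⟨j₁, hj₁⟩ := huv ε O' hO'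
  obtain ⟨j, hj, hj'⟩ := directed_of (· ≤ ·) j₀ j₁
  have := hj₁ j hj'
  simpa only [O', if_pos hj] using this
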